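/- If the backward-induction process V of the general discrete-time Dynkin game satisfies X_t ∧ Y_t ≤ V_t ≤ X_t ∨ Y_t for all t, then (τ*_t, σ*_t) with τ*_t = min{u ≥ t : V_u = L_u}, σ*_t = min{u ≥ t : V_u = U_u} is a Nash equilibrium of GDG_t(X,Y,Z): for all stopping times τ, σ ∈ T_[t,T], E[R(τ*_t, σ)|F_t] ≥ E[R(τ*_t, σ*_t)|F_t] ≥ E[R(τ, σ*_t)|F_t], and V is the value process of the game. -/

import Mathlib

open MeasureTheory Filter Set

/-- Payoff of the general Dynkin game. -/
noncomputable def payoffD {Ω : Type*} (X Y Z : ℕ → Ω → ℝ) (τ σ : Ω → ℕ) (ω : Ω) : ℝ :=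
  if τ ω < σ ω then X (τ ω) ω else if σ ω < τ ω then Y (σ ω) ω else Z (σ ω) ω

/-!
Write `L = X ∧ Z` and `U = Y ∨ Z`, so that `L ≤ V ≤ U`. Where `V_s ≠ L_s` the recursion gives
`V_s ≤ E[V_{s+1} | F_s]`, and where `V_s ≠ U_s` it gives `V_s ≥ E[V_{s+1} | F_s]`. So `V` is a
submartingale strictly before `τ*_t` and a supermartingale strictly before `σ*_t`, and optional
sampling yields `V_t ≤ E[V_{τ*_t ∧ σ} | F_t]` and `E[V_{τ ∧ σ*_t} | F_t] ≤ V_t`. At these sampling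
times the payoff dominates, resp. is dominated by, `V`: if the opponent stops first at a time `u`
before the hitting time, then `L_u < V_u ≤ U_u` together with the sandwich condition forces
`V_u ≤ Y_u` (resp. `X_u ≤ V_u`). For `σ = σ*_t` and `τ = τ*_t` the two bounds meet.
-/

section OptionalSampling

variable {Ω : Type*} {m0 : MeasurableSpace Ω} {μ : Measure Ω} {ℱ : Filtration ℕ m0}
  {W : ℕ → Ω → ℝ} {ρ : Ω → ℕ}

lemma measurable_of_isStoppingTime_coe (hρ : IsStoppingTime ℱ (fun ω => (ρ ω : WithTop ℕ))) :
    Measurable ρ :=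
  measurable_to_countable' fun n => by
    convert ℱ.le n _ (hρ.measurableSet_eq n) using 1
    ext ω
    simp

lemma isStoppingTime_coe_min {τ σ : Ω → ℕ} (hτ : IsStoppingTime ℱ (fun ω => (τ ω : WithTop ℕ)))
    (hσ : IsStoppingTime ℱ (fun ω => (σ ω : WithTop ℕ))) :
    IsStoppingTime ℱ (fun ω => ((min (τ ω) (σ ω) : ℕ) : WithTop ℕ)) := by
  rw [show (fun ω => ((min (τ ω) (σ ω) : ℕ) : WithTop ℕ)) = fun ω => min (τ ω : WithTop ℕ) (σ ω)
    from funext fun ω => WithTop.coe_min (τ ω) (σ ω)]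
  exact hτ.min hσ

lemma comp_min_succ_eq_add_indicator (W : ℕ → Ω → ℝ) (ρ : Ω → ℕ) (n : ℕ) :
    (fun ω => W (min (ρ ω) (n + 1)) ω)
      = (fun ω => W (min (ρ ω) n) ω) + {ω | n < ρ ω}.indicator (W (n + 1) - W n) := by
  funext ω
  by_cases h : n < ρ ω
  · simp [h, min_eq_right h.le]
  · have h' := not_lt.1 h
    simp [h, min_eq_left h', min_eq_left (h'.trans n.le_succ)]

variable [IsFiniteMeasure μ]

lemma le_condExp_stopped_of_le_condExp_succ (hW : StronglyAdapted ℱ W)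
    (hWi : ∀ n, Integrable (W n) μ) (hρ : IsStoppingTime ℱ (fun ω => (ρ ω : WithTop ℕ)))
    {t T : ℕ} (hρt : ∀ ω, t ≤ ρ ω) (hρT : ∀ ω, ρ ω ≤ T)
    (hstep : ∀ s, t ≤ s → ∀ᵐ ω ∂μ, s < ρ ω → W s ω ≤ μ[W (s + 1)|ℱ s] ω) :
    W t ≤ᵐ[μ] μ[fun ω => W (ρ ω) ω|ℱ t] := by
  suffices h : ∀ n, t ≤ n → W t ≤ᵐ[μ] μ[fun ω => W (min (ρ ω) n) ω|ℱ t] by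
    simpa only [min_eq_left ((hρT _).trans (le_max_right t T))] using h _ (le_max_left t T)
  intro n hn
  induction n, hn using Nat.le_induction with
  | base =>
    simp only [min_eq_right (hρt _)]
    rw [condExp_of_stronglyMeasurable (ℱ.le t) (hW t) (hWi t)]
  | succ n hn ih =>
    have hA : MeasurableSet[ℱ n] {ω | n < ρ ω} := by
      simpa using hρ.measurableSet_gt n
    have hD : Integrable (W (n + 1) - W n) μ := (hWi _).sub (hWi n)
    have hinc : 0 ≤ᵐ[μ] μ[{ω | n < ρ ω}.indicator (W (n + 1) - W n)|ℱ n] := by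
      filter_upwards [condExp_indicator hD hA, condExp_sub (m := ℱ n) (hWi (n + 1)) (hWi n),
        hstep n hn] with ω hind hsub hω
      rw [hind, condExp_of_stronglyMeasurable (ℱ.le n) (hW n) (hWi n)] at *
      by_cases h : n < ρ ω
      · simpa [h, hsub] using hω h
      · simp [h]
    have hmin : Integrable (fun ω => W (min (ρ ω) n) ω) μ :=
      integrable_stoppedValue ℕ (isStoppingTime_coe_min hρ (isStoppingTime_const ℱ n)) hWi
        (N := n) fun ω => WithTop.coe_le_coe.2 (min_le_right _ _)
    filter_upwards [ih, condExp_add (m := ℱ t) hmin (hD.indicator (ℱ.le n _ hA)),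
      ℱ.condExp_condExp ({ω | n < ρ ω}.indicator (W (n + 1) - W n)) hn,
      condExp_nonneg (m := ℱ t) hinc] with ω hih hadd htower hnonneg
    rw [Pi.zero_apply] at hnonneg
    rw [comp_min_succ_eq_add_indicator, hadd, Pi.add_apply]
    linarith

lemma condExp_stopped_le_of_condExp_succ_le (hW : StronglyAdapted ℱ W)
    (hWi : ∀ n, Integrable (W n) μ) (hρ : IsStoppingTime ℱ (fun ω => (ρ ω : WithTop ℕ)))
    {t T : ℕ} (hρt : ∀ ω, t ≤ ρ ω) (hρT : ∀ ω, ρ ω ≤ T)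
    (hstep : ∀ s, t ≤ s → ∀ᵐ ω ∂μ, s < ρ ω → μ[W (s + 1)|ℱ s] ω ≤ W s ω) :
    μ[fun ω => W (ρ ω) ω|ℱ t] ≤ᵐ[μ] W t := by
  have hneg := le_condExp_stopped_of_le_condExp_succ (W := -W) hW.neg (fun n => (hWi n).neg)
    hρ hρt hρT fun s hs => by
      filter_upwards [hstep s hs, condExp_neg (W (s + 1)) (ℱ s : MeasurableSpace Ω)]
        with ω hω hcond hlt
      simpa [hcond] using hω hlt
  filter_upwards [hneg, condExp_neg (fun ω => W (ρ ω) ω) (ℱ t : MeasurableSpace Ω)] with ω hω hcond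
  rw [show (fun ω => (-W) (ρ ω) ω) = -fun ω => W (ρ ω) ω from rfl, hcond] at hω
  simpa using hω

end OptionalSampling

section FirstHitting

variable {Ω : Type*} {P : ℕ → Ω → Prop} {κ : Ω → ℕ} {t T : ℕ}

lemma hitting_spec_of_eq_sInf (ht : t ≤ T) (hPT : ∀ ω, P T ω)
    (hκ : ∀ ω, κ ω = sInf {u | t ≤ u ∧ u ≤ T ∧ P u ω}) :
    (∀ ω, κ ω ∈ Icc t T) ∧ (∀ ω, P (κ ω) ω) ∧ ∀ ω u, t ≤ u → u < κ ω → ¬P u ω := by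
  have hmem : ∀ ω, t ≤ κ ω ∧ κ ω ≤ T ∧ P (κ ω) ω := fun ω => by
    rw [hκ ω]
    exact Nat.sInf_mem (s := {u | t ≤ u ∧ u ≤ T ∧ P u ω}) ⟨T, ht, le_rfl, hPT ω⟩
  refine ⟨fun ω => ⟨(hmem ω).1, (hmem ω).2.1⟩, fun ω => (hmem ω).2.2, fun ω u htu hu hP => ?_⟩
  have huT : u ≤ T := (hu.trans_le (hmem ω).2.1).le
  rw [hκ ω] at hu
  exact Nat.notMem_of_lt_sInf hu ⟨htu, huT, hP⟩

lemma isStoppingTime_of_eq_sInf_hitting {m0 : MeasurableSpace Ω} {ℱ : Filtration ℕ m0}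
    (ht : t ≤ T) (hPT : ∀ ω, P T ω) (hP : ∀ u ≤ T, MeasurableSet[ℱ u] {ω | P u ω})
    (hκ : ∀ ω, κ ω = sInf {u | t ≤ u ∧ u ≤ T ∧ P u ω}) :
    IsStoppingTime ℱ (fun ω => (κ ω : WithTop ℕ)) := by
  intro n
  have hset : {ω | κ ω ≤ n} = ⋃ u ∈ Iic n, {ω | t ≤ u ∧ u ≤ T ∧ P u ω} := by
    ext ω
    simp only [hκ, mem_ofPred_eq, mem_iUnion, mem_Iic, exists_prop]
    exact ⟨fun h => ⟨_, h, Nat.sInf_mem (s := {u | t ≤ u ∧ u ≤ T ∧ P u ω}) ⟨T, ht, le_rfl, hPT ω⟩⟩,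
      fun ⟨u, hun, hu⟩ => (Nat.sInf_le hu).trans hun⟩
  simp only [ENat.some_eq_natCast, Nat.cast_le]
  rw [hset]
  refine MeasurableSet.biUnion (to_countable _) fun u hun => ?_
  by_cases htu : t ≤ u ∧ u ≤ T
  · simpa [htu] using ℱ.mono hun _ (hP u htu.2)
  · simp only [← and_assoc, htu, false_and, ofPred_false, MeasurableSet.empty]

end FirstHitting

section DynkinGame

variable {Ω : Type*} {m0 : MeasurableSpace Ω} {μ : Measure Ω} {ℱ : Filtration ℕ m0}
  {X Y Z V : ℕ → Ω → ℝ} {T : ℕ}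

-- `V` is only specified on `{0, …, T}`; frozen after `T` it becomes a process indexed by `ℕ`.
lemma stronglyAdapted_integrable_backwardInduction
    (hXa : Adapted ℱ X) (hYa : Adapted ℱ Y) (hZa : Adapted ℱ Z)
    (hXi : ∀ s, Integrable (X s) μ) (hYi : ∀ s, Integrable (Y s) μ)
    (hZi : ∀ s, Integrable (Z s) μ) (hVT : ∀ ω, V T ω = Z T ω)
    (hV : ∀ s, s < T → ∀ ω, V s ω =
      min (max (Y s ω) (Z s ω)) (max (min (X s ω) (Z s ω)) ((μ[V (s + 1)|ℱ s]) ω))) :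
    StronglyAdapted ℱ (fun s => V (min s T)) ∧ ∀ s, Integrable (V (min s T)) μ := by
  have h : ∀ s ≤ T, StronglyMeasurable[ℱ s] (V s) ∧ Integrable (V s) μ := by
    refine fun s hs => Nat.decreasingInduction (fun s hs _ => ?_) ?_ hs
    · rw [show V s = _ from funext (hV s hs)]
      exact ⟨(((hYa s).max (hZa s)).min (((hXa s).min (hZa s)).max
          stronglyMeasurable_condExp.measurable)).stronglyMeasurable,
        ((hYi s).sup (hZi s)).inf (((hXi s).inf (hZi s)).sup integrable_condExp)⟩
    · exact funext hVT ▸ ⟨(hZa T).stronglyMeasurable, hZi T⟩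
  exact ⟨fun s => (h _ (min_le_right s T)).1.mono (ℱ.mono (min_le_left s T)),
    fun s => (h _ (min_le_right s T)).2⟩

lemma backwardInduction_mem_obstacles (htermX : ∀ ω, X T ω = Z T ω)
    (htermY : ∀ ω, Y T ω = Z T ω) (hVT : ∀ ω, V T ω = Z T ω)
    (hV : ∀ s, s < T → ∀ ω, V s ω =
      min (max (Y s ω) (Z s ω)) (max (min (X s ω) (Z s ω)) ((μ[V (s + 1)|ℱ s]) ω)))
    {s : ℕ} (hs : s ≤ T) (ω : Ω) :
    min (X s ω) (Z s ω) ≤ V s ω ∧ V s ω ≤ max (Y s ω) (Z s ω) := by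
  rcases hs.lt_or_eq with hs | rfl
  · rw [hV s hs ω]
    grind
  · simp [hVT, htermX, htermY]

lemma backwardInduction_stopped_le_payoffD {τ σ : Ω → ℕ} {ω : Ω}
    (hτ : V (τ ω) ω = min (X (τ ω) ω) (Z (τ ω) ω))
    (hσ : σ ω < τ ω → V (σ ω) ω ≠ min (X (σ ω) ω) (Z (σ ω) ω))
    (hL : min (X (σ ω) ω) (Z (σ ω) ω) ≤ V (σ ω) ω)
    (hU : V (σ ω) ω ≤ max (Y (σ ω) ω) (Z (σ ω) ω))
    (hsand : V (σ ω) ω ≤ max (X (σ ω) ω) (Y (σ ω) ω)) :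
    V (min (τ ω) (σ ω)) ω ≤ payoffD X Y Z τ σ ω := by
  unfold payoffD
  rcases lt_trichotomy (τ ω) (σ ω) with h | h | h
  · simp [h, min_eq_left h.le, hτ]
  · rw [h] at hτ
    simp [h, hτ]
  · have := hσ h
    simp only [h, min_eq_right h.le, h.not_gt, if_false, if_true]
    grind

lemma payoffD_le_backwardInduction_stopped {τ σ : Ω → ℕ} {ω : Ω}
    (hσ : V (σ ω) ω = max (Y (σ ω) ω) (Z (σ ω) ω))
    (hτ : τ ω < σ ω → V (τ ω) ω ≠ max (Y (τ ω) ω) (Z (τ ω) ω))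
    (hL : min (X (τ ω) ω) (Z (τ ω) ω) ≤ V (τ ω) ω)
    (hU : V (τ ω) ω ≤ max (Y (τ ω) ω) (Z (τ ω) ω))
    (hsand : min (X (τ ω) ω) (Y (τ ω) ω) ≤ V (τ ω) ω) :
    payoffD X Y Z τ σ ω ≤ V (min (τ ω) (σ ω)) ω := by
  unfold payoffD
  rcases lt_trichotomy (τ ω) (σ ω) with h | h | h
  · have := hτ h
    simp only [h, min_eq_left h.le, if_true]
    grind
  · simp [h, hσ]
  · simp [h, h.not_gt, min_eq_right h.le, hσ]

lemma integrable_payoffD (hXi : ∀ s, Integrable (X s) μ)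
    (hYi : ∀ s, Integrable (Y s) μ) (hZi : ∀ s, Integrable (Z s) μ) {τ σ : Ω → ℕ}
    (hτ : IsStoppingTime ℱ (fun ω => (τ ω : WithTop ℕ)))
    (hσ : IsStoppingTime ℱ (fun ω => (σ ω : WithTop ℕ)))
    (hτT : ∀ ω, τ ω ≤ T) (hσT : ∀ ω, σ ω ≤ T) :
    Integrable (payoffD X Y Z τ σ) μ := by
  have hτT' : ∀ ω, (τ ω : WithTop ℕ) ≤ T := fun ω => WithTop.coe_le_coe.2 (hτT ω)
  have hσT' : ∀ ω, (σ ω : WithTop ℕ) ≤ T := fun ω => WithTop.coe_le_coe.2 (hσT ω)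
  have hX := integrable_stoppedValue ℕ hτ hXi hτT'
  have hY := integrable_stoppedValue ℕ hσ hYi hσT'
  have hZ := integrable_stoppedValue ℕ hσ hZi hσT'
  have hτm := measurable_of_isStoppingTime_coe hτ
  have hσm := measurable_of_isStoppingTime_coe hσ
  have hpiecewise : payoffD X Y Z τ σ = {ω | τ ω < σ ω}.piecewise (stoppedValue X (τ ·))
      ({ω | σ ω < τ ω}.piecewise (stoppedValue Y (σ ·)) (stoppedValue Z (σ ·))) := rfl
  rw [hpiecewise]
  exact Integrable.piecewise (measurableSet_lt hτm hσm) hX.integrableOn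
    (Integrable.piecewise (measurableSet_lt hσm hτm) hY.integrableOn hZ.integrableOn).integrableOn

variable [IsFiniteMeasure μ]

lemma backwardInduction_le_condExp_payoffD (hXi : ∀ s, Integrable (X s) μ)
    (hYi : ∀ s, Integrable (Y s) μ) (hZi : ∀ s, Integrable (Z s) μ)
    (hW : StronglyAdapted ℱ (fun s => V (min s T))) (hWi : ∀ s, Integrable (V (min s T)) μ)
    (hV : ∀ s, s < T → ∀ ω, V s ω =
      min (max (Y s ω) (Z s ω)) (max (min (X s ω) (Z s ω)) ((μ[V (s + 1)|ℱ s]) ω)))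
    (hobs : ∀ s ≤ T, ∀ ω, min (X s ω) (Z s ω) ≤ V s ω ∧ V s ω ≤ max (Y s ω) (Z s ω))
    (hsand : ∀ᵐ ω ∂μ, ∀ s ≤ T, V s ω ≤ max (X s ω) (Y s ω))
    {t : ℕ} (ht : t ≤ T) {τ σ : Ω → ℕ}
    (hτ : IsStoppingTime ℱ (fun ω => (τ ω : WithTop ℕ)))
    (hσ : IsStoppingTime ℱ (fun ω => (σ ω : WithTop ℕ)))
    (hτr : ∀ ω, τ ω ∈ Icc t T) (hσr : ∀ ω, σ ω ∈ Icc t T)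
    (hτL : ∀ ω, V (τ ω) ω = min (X (τ ω) ω) (Z (τ ω) ω))
    (hτfirst : ∀ ω u, t ≤ u → u < τ ω → V u ω ≠ min (X u ω) (Z u ω)) :
    V t ≤ᵐ[μ] μ[payoffD X Y Z τ σ|ℱ t] := by
  have hρT : ∀ ω, min (τ ω) (σ ω) ≤ T := fun ω => (min_le_left _ _).trans (hτr ω).2
  have hstep : ∀ s, t ≤ s → ∀ᵐ ω ∂μ, s < min (τ ω) (σ ω) →
      V (min s T) ω ≤ μ[V (min (s + 1) T)|ℱ s] ω := by
    refine fun s hts => ae_of_all _ fun ω hs => ?_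
    have hsT : s < T := hs.trans_le (hρT ω)
    have hne := hτfirst ω s hts (hs.trans_le (min_le_left _ _))
    have hVs := hV s hsT ω
    rw [min_eq_left hsT.le, min_eq_left (Nat.succ_le_of_lt hsT)]
    grind
  have hsampling := le_condExp_stopped_of_le_condExp_succ hW hWi (isStoppingTime_coe_min hτ hσ)
    (fun ω => le_min (hτr ω).1 (hσr ω).1) hρT hstep
  have hpay : (fun ω => V (min (min (τ ω) (σ ω)) T) ω) ≤ᵐ[μ] payoffD X Y Z τ σ := by
    filter_upwards [hsand] with ω hω
    rw [min_eq_left (hρT ω)]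
    exact backwardInduction_stopped_le_payoffD (hτL ω) (hτfirst ω _ (hσr ω).1)
      (hobs _ (hσr ω).2 ω).1 (hobs _ (hσr ω).2 ω).2 (hω _ (hσr ω).2)
  have hint := integrable_stoppedValue ℕ (isStoppingTime_coe_min hτ hσ) hWi (N := T)
    fun ω => WithTop.coe_le_coe.2 (hρT ω)
  simpa [min_eq_left ht] using hsampling.trans (condExp_mono hint
    (integrable_payoffD hXi hYi hZi hτ hσ (fun ω => (hτr ω).2) (fun ω => (hσr ω).2)) hpay)

lemma condExp_payoffD_le_backwardInduction (hXi : ∀ s, Integrable (X s) μ)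
    (hYi : ∀ s, Integrable (Y s) μ) (hZi : ∀ s, Integrable (Z s) μ)
    (hW : StronglyAdapted ℱ (fun s => V (min s T))) (hWi : ∀ s, Integrable (V (min s T)) μ)
    (hV : ∀ s, s < T → ∀ ω, V s ω =
      min (max (Y s ω) (Z s ω)) (max (min (X s ω) (Z s ω)) ((μ[V (s + 1)|ℱ s]) ω)))
    (hobs : ∀ s ≤ T, ∀ ω, min (X s ω) (Z s ω) ≤ V s ω ∧ V s ω ≤ max (Y s ω) (Z s ω))
    (hsand : ∀ᵐ ω ∂μ, ∀ s ≤ T, min (X s ω) (Y s ω) ≤ V s ω)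
    {t : ℕ} (ht : t ≤ T) {τ σ : Ω → ℕ}
    (hτ : IsStoppingTime ℱ (fun ω => (τ ω : WithTop ℕ)))
    (hσ : IsStoppingTime ℱ (fun ω => (σ ω : WithTop ℕ)))
    (hτr : ∀ ω, τ ω ∈ Icc t T) (hσr : ∀ ω, σ ω ∈ Icc t T)
    (hσU : ∀ ω, V (σ ω) ω = max (Y (σ ω) ω) (Z (σ ω) ω))
    (hσfirst : ∀ ω u, t ≤ u → u < σ ω → V u ω ≠ max (Y u ω) (Z u ω)) :
    μ[payoffD X Y Z τ σ|ℱ t] ≤ᵐ[μ] V t := by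
  have hρT : ∀ ω, min (τ ω) (σ ω) ≤ T := fun ω => (min_le_right _ _).trans (hσr ω).2
  have hstep : ∀ s, t ≤ s → ∀ᵐ ω ∂μ, s < min (τ ω) (σ ω) →
      μ[V (min (s + 1) T)|ℱ s] ω ≤ V (min s T) ω := by
    refine fun s hts => ae_of_all _ fun ω hs => ?_
    have hsT : s < T := hs.trans_le (hρT ω)
    have hne := hσfirst ω s hts (hs.trans_le (min_le_right _ _))
    have hVs := hV s hsT ω
    rw [min_eq_left hsT.le, min_eq_left (Nat.succ_le_of_lt hsT)]
    grind
  have hsampling := condExp_stopped_le_of_condExp_succ_le hW hWi (isStoppingTime_coe_min hτ hσ)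
    (fun ω => le_min (hτr ω).1 (hσr ω).1) hρT hstep
  have hpay : payoffD X Y Z τ σ ≤ᵐ[μ] fun ω => V (min (min (τ ω) (σ ω)) T) ω := by
    filter_upwards [hsand] with ω hω
    rw [min_eq_left (hρT ω)]
    exact payoffD_le_backwardInduction_stopped (hσU ω) (hσfirst ω _ (hτr ω).1)
      (hobs _ (hτr ω).2 ω).1 (hobs _ (hτr ω).2 ω).2 (hω _ (hτr ω).2)
  have hint := integrable_stoppedValue ℕ (isStoppingTime_coe_min hτ hσ) hWi (N := T)
    fun ω => WithTop.coe_le_coe.2 (hρT ω)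
  simpa [min_eq_left ht] using (condExp_mono
    (integrable_payoffD hXi hYi hZi hτ hσ (fun ω => (hτr ω).2) (fun ω => (hσr ω).2)) hint
    hpay).trans hsampling

end DynkinGame

/-- If the backward-induction process `V` of the general discrete-time Dynkin game
satisfies the sandwich condition `X_t ∧ Y_t ≤ V_t ≤ X_t ∨ Y_t` for all `t`, then
`(τ*_t, σ*_t)` with `τ*_t = min {u ≥ t : V_u = L_u}`, `σ*_t = min {u ≥ t : V_u = U_u}`
(`L = X ∧ Z`, `U = Y ∨ Z`) is a Nash equilibrium of `GDG_t(X,Y,Z)`, and `V` is the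
value process of the game. -/
theorem stmt11 {Ω : Type*} {m0 : MeasurableSpace Ω} (μ : Measure Ω) [IsProbabilityMeasure μ]
    (ℱ : Filtration ℕ m0) (T : ℕ)
    (X Y Z V : ℕ → Ω → ℝ)
    (hXa : Adapted ℱ X) (hYa : Adapted ℱ Y) (hZa : Adapted ℱ Z)
    (hXi : ∀ s, Integrable (X s) μ) (hYi : ∀ s, Integrable (Y s) μ)
    (hZi : ∀ s, Integrable (Z s) μ)
    (htermX : ∀ ω, X T ω = Z T ω) (htermY : ∀ ω, Y T ω = Z T ω)
    (hVT : ∀ ω, V T ω = Z T ω)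
    (hV : ∀ s, s < T → ∀ ω, V s ω =
      min (max (Y s ω) (Z s ω))
        (max (min (X s ω) (Z s ω)) ((μ[V (s + 1) | ℱ s]) ω)))
    (hsand : ∀ s, s ≤ T → ∀ᵐ ω ∂μ,
      min (X s ω) (Y s ω) ≤ V s ω ∧ V s ω ≤ max (X s ω) (Y s ω))
    (t : ℕ) (ht : t ≤ T)
    (τs σs : Ω → ℕ)
    (hτs : ∀ ω, τs ω = sInf {u | t ≤ u ∧ u ≤ T ∧ V u ω = min (X u ω) (Z u ω)})
    (hσs : ∀ ω, σs ω = sInf {u | t ≤ u ∧ u ≤ T ∧ V u ω = max (Y u ω) (Z u ω)}) :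
    IsStoppingTime ℱ (fun ω => (τs ω : WithTop ℕ)) ∧ IsStoppingTime ℱ (fun ω => (σs ω : WithTop ℕ)) ∧
    (∀ ω, τs ω ∈ Set.Icc t T) ∧ (∀ ω, σs ω ∈ Set.Icc t T) ∧
    -- Nash equilibrium property:
    (∀ τ σ : Ω → ℕ, IsStoppingTime ℱ (fun ω => (τ ω : WithTop ℕ)) → IsStoppingTime ℱ (fun ω => (σ ω : WithTop ℕ)) →
      (∀ ω, τ ω ∈ Set.Icc t T) → (∀ ω, σ ω ∈ Set.Icc t T) →
      (μ[payoffD X Y Z τs σs | ℱ t] ≤ᵐ[μ] μ[payoffD X Y Z τs σ | ℱ t]) ∧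
      (μ[payoffD X Y Z τ σs | ℱ t] ≤ᵐ[μ] μ[payoffD X Y Z τs σs | ℱ t])) ∧
    -- `V_t` is the value, attained at the equilibrium:
    V t =ᵐ[μ] μ[payoffD X Y Z τs σs | ℱ t] ∧
    (∀ τ σ : Ω → ℕ, IsStoppingTime ℱ (fun ω => (τ ω : WithTop ℕ)) → IsStoppingTime ℱ (fun ω => (σ ω : WithTop ℕ)) →
      (∀ ω, τ ω ∈ Set.Icc t T) → (∀ ω, σ ω ∈ Set.Icc t T) →
      (V t ≤ᵐ[μ] μ[payoffD X Y Z τs σ | ℱ t]) ∧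
      (μ[payoffD X Y Z τ σs | ℱ t] ≤ᵐ[μ] V t)) := by
  obtain ⟨hW, hWi⟩ := stronglyAdapted_integrable_backwardInduction hXa hYa hZa hXi hYi hZi hVT hV
  have hVm : ∀ u ≤ T, Measurable[ℱ u] (V u) := fun u hu => by
    simpa [min_eq_left hu] using (hW u).measurable
  have hobs : ∀ s ≤ T, ∀ ω, min (X s ω) (Z s ω) ≤ V s ω ∧ V s ω ≤ max (Y s ω) (Z s ω) :=
    fun s hs => backwardInduction_mem_obstacles htermX htermY hVT hV hs
  have hsand' : ∀ᵐ ω ∂μ, ∀ s ≤ T, min (X s ω) (Y s ω) ≤ V s ω ∧ V s ω ≤ max (X s ω) (Y s ω) :=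
    ae_all_iff.2 fun s => eventually_imp_distrib_left.2 (hsand s)
  have hτT : ∀ ω, V T ω = min (X T ω) (Z T ω) := fun ω => by simp [hVT, htermX]
  have hσT : ∀ ω, V T ω = max (Y T ω) (Z T ω) := fun ω => by simp [hVT, htermY]
  obtain ⟨hτr, hτL, hτfirst⟩ := hitting_spec_of_eq_sInf ht hτT hτs
  obtain ⟨hσr, hσU, hσfirst⟩ := hitting_spec_of_eq_sInf ht hσT hσs
  have hτ := isStoppingTime_of_eq_sInf_hitting ht hτT
    (fun u hu => measurableSet_eq_fun (hVm u hu) ((hXa u).min (hZa u))) hτs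
  have hσ := isStoppingTime_of_eq_sInf_hitting ht hσT
    (fun u hu => measurableSet_eq_fun (hVm u hu) ((hYa u).max (hZa u))) hσs
  have hlower : ∀ σ : Ω → ℕ, IsStoppingTime ℱ (fun ω => (σ ω : WithTop ℕ)) →
      (∀ ω, σ ω ∈ Icc t T) → V t ≤ᵐ[μ] μ[payoffD X Y Z τs σ|ℱ t] := fun σ hσ' hσr' =>
    backwardInduction_le_condExp_payoffD hXi hYi hZi hW hWi hV hobs
      (hsand'.mono fun ω h s hs => (h s hs).2) ht hτ hσ' hτr hσr' hτL hτfirst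
  have hupper : ∀ τ : Ω → ℕ, IsStoppingTime ℱ (fun ω => (τ ω : WithTop ℕ)) →
      (∀ ω, τ ω ∈ Icc t T) → μ[payoffD X Y Z τ σs|ℱ t] ≤ᵐ[μ] V t := fun τ hτ' hτr' =>
    condExp_payoffD_le_backwardInduction hXi hYi hZi hW hWi hV hobs
      (hsand'.mono fun ω h s hs => (h s hs).1) ht hτ' hσ hτr' hσr hσU hσfirst
  have hval : V t =ᵐ[μ] μ[payoffD X Y Z τs σs|ℱ t] :=
    (hlower σs hσ hσr).antisymm (hupper τs hτ hτr)
  refine ⟨hτ, hσ, hτr, hσr, fun τ σ hτ' hσ' hτr' hσr' => ⟨?_, ?_⟩, hval,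
    fun τ σ hτ' hσ' hτr' hσr' => ⟨hlower σ hσ' hσr', hupper τ hτ' hτr'⟩⟩
  · exact hval.symm.le.trans (hlower σ hσ' hσr')
  · exact (hupper τ hτ' hτr').trans hval.le
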